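/- arXiv:1401.5652 — 7 statements merged into one kernel-verified Lean document; each statement's English description precedes it below -/
import Mathlib

section
/- Let τ > 0 and b ∈ ℝ, and let exp_τ(b,·) denote the delayed exponential function. Then exp_τ(b,·) is continuous on [−τ, ∞), equals 1 identically on [−τ, 0], and is differentiable at every t > 0 with derivative d/dt exp_τ(b, t) = b · exp_τ(b, t − τ). In particular, u(t) := exp_τ(b, t) solves the pure delay equation u′(t) = b u(t − τ) for t > 0 with initial history u ≡ 1 on [−τ, 0]. -/
/-!
Replacing `t - (k - 1)τ` by its positive part makes the `k`-th term vanish exactly when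
`k > ⌊t/τ⌋ + 1`, so on `[-τ, t + τ)` the delayed exponential agrees with a fixed finite sum of
such terms. That sum is continuous, and since `max (y - kτ) 0 ^ (k + 1)` is `C¹` for `k ≥ 1`,
differentiating term `k + 1` gives `b` times term `k` evaluated at `t - τ`; only the linear term
`b · max t 0` needs `t > 0`.
-/

open Real Set

/-- The delayed exponential function: `exp_τ(b, t) = 0` for `t < -τ`, and
`exp_τ(b, t) = 1 + ∑_{k=1}^{⌊t/τ⌋+1} b^k (t - (k-1)τ)^k / k!` for `t ≥ -τ`. -/
noncomputable def delayedExp (τ b t : ℝ) : ℝ :=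
  if t < -τ then 0
  else 1 + ∑ k ∈ Finset.Icc 1 (⌊t / τ⌋ + 1).toNat,
    b ^ k * (t - ((k : ℝ) - 1) * τ) ^ k / (Nat.factorial k)

open Finset Filter Topology

lemma hasDerivAt_max_zero_pow {n : ℕ} {x : ℝ} (h : 2 ≤ n ∨ 0 < x) :
    HasDerivAt (fun y : ℝ => max y 0 ^ n) (n * max x 0 ^ (n - 1)) x := by
  have right : ∀ x, 0 ≤ x → HasDerivWithinAt (fun y : ℝ => max y 0 ^ n)
      (n * max x 0 ^ (n - 1)) (Ici 0) x := fun x hx => by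
    rw [max_eq_left hx]
    exact (hasDerivAt_pow n x).hasDerivWithinAt.congr (fun y hy => by rw [max_eq_left hy])
      (by rw [max_eq_left hx])
  rcases h with hn | hx
  · have left : ∀ x ≤ 0, HasDerivWithinAt (fun y : ℝ => max y 0 ^ n)
        (n * max x 0 ^ (n - 1)) (Iic 0) x := fun x hx => by
      rw [max_eq_right hx, zero_pow (by omega), mul_zero]
      exact (hasDerivWithinAt_const x _ 0).congr
        (fun y hy => by rw [max_eq_right hy, zero_pow (by omega)])
        (by rw [max_eq_right hx, zero_pow (by omega)])
    rcases lt_trichotomy x 0 with hx | rfl | hx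
    · exact (left x hx.le).hasDerivAt (Iic_mem_nhds hx)
    · simpa using (left 0 le_rfl).union (right 0 le_rfl)
    · exact (right x hx.le).hasDerivAt (Ici_mem_nhds hx)
  · exact (right x hx.le).hasDerivAt (Ici_mem_nhds hx)

noncomputable def delayedExpTerm (τ b : ℝ) (k : ℕ) (t : ℝ) : ℝ :=
  b ^ k * max (t - ((k : ℝ) - 1) * τ) 0 ^ k / k.factorial

section delayedExpTerm

variable {τ b : ℝ}

@[simp]
lemma delayedExpTerm_zero : delayedExpTerm τ b 0 = fun _ => 1 := by
  funext t; simp [delayedExpTerm]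

lemma continuous_delayedExpTerm (k : ℕ) : Continuous (delayedExpTerm τ b k) := by
  unfold delayedExpTerm; fun_prop

lemma hasDerivAt_delayedExpTerm_succ {k : ℕ} {t : ℝ} (h : 1 ≤ k ∨ 0 < t) :
    HasDerivAt (delayedExpTerm τ b (k + 1)) (b * delayedExpTerm τ b k (t - τ)) t := by
  have hn : 2 ≤ k + 1 ∨ 0 < t - k * τ := by
    rcases k with _ | k
    · simpa using h
    · omega
  have hterm : delayedExpTerm τ b (k + 1) =
      fun y => b ^ (k + 1) / (k + 1).factorial * max (y - k * τ) 0 ^ (k + 1) := by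
    funext y; simp [delayedExpTerm]; ring
  rw [hterm]
  refine (((hasDerivAt_max_zero_pow hn).comp t ((hasDerivAt_id t).sub_const _)).const_mul
    (b ^ (k + 1) / (k + 1).factorial)).congr_deriv ?_
  simp only [delayedExpTerm, Nat.factorial_succ]
  push_cast
  rw [show t - τ - ((k : ℝ) - 1) * τ = t - k * τ by ring]
  field_simp
  ring

lemma hasDerivAt_sum_delayedExpTerm (N : ℕ) {t : ℝ} (ht : 0 < t) :
    HasDerivAt (fun s => ∑ k ∈ range (N + 1), delayedExpTerm τ b k s)
      (b * ∑ k ∈ range N, delayedExpTerm τ b k (t - τ)) t := by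
  simp only [sum_range_succ' _ N, delayedExpTerm_zero, mul_sum]
  exact (HasDerivAt.fun_sum fun k _ => hasDerivAt_delayedExpTerm_succ (.inr ht)).add_const 1

end delayedExpTerm

lemma sub_one_mul_le_iff_le_floor_add_one {τ t : ℝ} (hτ : 0 < τ) (k : ℕ) :
    ((k : ℝ) - 1) * τ ≤ t ↔ (k : ℤ) ≤ ⌊t / τ⌋ + 1 := by
  rw [← le_div_iff₀ hτ, ← sub_le_iff_le_add, Int.le_floor]
  push_cast
  rfl

lemma sum_range_succ_eq_add_sum_Icc {M : Type*} [AddCommMonoid M] (f : ℕ → M) (N : ℕ) :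
    ∑ k ∈ range (N + 1), f k = f 0 + ∑ k ∈ Icc 1 N, f k := by
  rw [range_eq_Ico, sum_eq_sum_Ico_succ_bot (Nat.succ_pos N), ← Finset.Ico_add_one_right_eq_Icc]
  rfl

section delayedExp

variable {τ b t : ℝ}

lemma delayedExp_eq_sum (hτ : 0 < τ) (ht : -τ ≤ t) {N : ℕ} (hN : (⌊t / τ⌋ + 1).toNat < N) :
    delayedExp τ b t = ∑ k ∈ range N, delayedExpTerm τ b k t := by
  obtain ⟨N, rfl⟩ : ∃ M, N = M + 1 := ⟨N - 1, by omega⟩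
  rw [delayedExp, if_neg ht.not_gt, sum_range_succ_eq_add_sum_Icc, delayedExpTerm_zero]
  congr 1
  refine sum_subset_zero_on_sdiff (Icc_subset_Icc_right (by omega)) (fun k hk => ?_)
    (fun k hk => ?_)
  · obtain ⟨hk, hk'⟩ := mem_sdiff.1 hk
    rw [Finset.mem_Icc] at hk hk'
    have : t < ((k : ℝ) - 1) * τ := by
      rw [← not_le, sub_one_mul_le_iff_le_floor_add_one hτ]
      omega
    rw [delayedExpTerm, max_eq_right (by linarith), zero_pow (by omega), mul_zero, zero_div]
  · rw [Finset.mem_Icc] at hk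
    rw [delayedExpTerm,
      max_eq_left (sub_nonneg.2 ((sub_one_mul_le_iff_le_floor_add_one hτ k).2 (by omega)))]

lemma eqOn_delayedExp_sum (hτ : 0 < τ) {N : ℕ} (hN : (⌊t / τ⌋ + 2).toNat < N) :
    EqOn (delayedExp τ b) (fun s => ∑ k ∈ range N, delayedExpTerm τ b k s) (Ico (-τ) (t + τ)) :=
  fun s ⟨hs, hst⟩ => by
    have : ⌊s / τ⌋ ≤ ⌊t / τ⌋ + 1 := by
      rw [← Int.floor_add_one]
      refine Int.floor_le_floor ?_
      rw [div_add_one hτ.ne', div_le_div_iff_of_pos_right hτ]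
      exact hst.le
    exact delayedExp_eq_sum hτ hs (by omega)

lemma continuousWithinAt_delayedExp (hτ : 0 < τ) (ht : -τ ≤ t) :
    ContinuousWithinAt (delayedExp τ b) (Ici (-τ)) t := by
  have hnhds : Ico (-τ) (t + τ) ∈ 𝓝[Ici (-τ)] t := by
    rw [← Ici_inter_Iio]
    exact inter_mem_nhdsWithin _ (Iio_mem_nhds (by linarith))
  have hEq := eqOn_delayedExp_sum (b := b) hτ (Nat.lt_succ_self (⌊t / τ⌋ + 2).toNat)
  exact (continuous_finsetSum _ fun k _ => continuous_delayedExpTerm k).continuousWithinAt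
    |>.congr_of_eventuallyEq (mem_of_superset hnhds hEq) (hEq (mem_of_mem_nhdsWithin ht hnhds))

lemma delayedExp_of_mem_Icc (hτ : 0 < τ) (ht : t ∈ Icc (-τ) 0) : delayedExp τ b t = 1 := by
  have : ⌊t / τ⌋ ≤ 0 := Int.floor_nonpos (div_nonpos_of_nonpos_of_nonneg ht.2 hτ.le)
  rw [delayedExp_eq_sum hτ ht.1 (N := 2) (by omega)]
  simp [sum_range_succ, delayedExpTerm, max_eq_right ht.2]

lemma hasDerivAt_delayedExp (hτ : 0 < τ) (ht : 0 < t) :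
    HasDerivAt (delayedExp τ b) (b * delayedExp τ b (t - τ)) t := by
  have hfloor : 0 ≤ ⌊t / τ⌋ := Int.floor_nonneg.2 (by positivity)
  set n := (⌊t / τ⌋ + 2).toNat
  have hpast : delayedExp τ b (t - τ) = ∑ k ∈ range n, delayedExpTerm τ b k (t - τ) := by
    refine delayedExp_eq_sum hτ (by linarith) ?_
    rw [sub_div, div_self hτ.ne', Int.floor_sub_one]
    omega
  rw [hpast]
  exact (hasDerivAt_sum_delayedExpTerm n ht).congr_of_eventuallyEq <|
    mem_of_superset (Ioo_mem_nhds (by linarith : -τ < t) (by linarith : t < t + τ))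
      (Ioo_subset_Ico_self.trans (eqOn_delayedExp_sum hτ (Nat.lt_succ_self n)))

end delayedExp

/-- The delayed exponential is continuous on `[-τ, ∞)`, is identically `1` on `[-τ, 0]`,
and is differentiable at every `t > 0` with derivative `b · exp_τ(b, t - τ)`; in particular
it solves the pure delay equation `u'(t) = b u(t - τ)` with history `u ≡ 1` on `[-τ, 0]`. -/
theorem delayedExp_properties (τ b : ℝ) (hτ : 0 < τ) :
    ContinuousOn (delayedExp τ b) (Ici (-τ)) ∧
    (∀ t ∈ Icc (-τ) (0 : ℝ), delayedExp τ b t = 1) ∧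
    (∀ t : ℝ, 0 < t → HasDerivAt (delayedExp τ b) (b * delayedExp τ b (t - τ)) t) :=
  ⟨fun _ ht => continuousWithinAt_delayedExp hτ ht, fun _ ht => delayedExp_of_mem_Icc hτ ht,
    fun _ ht => hasDerivAt_delayedExp hτ ht⟩
end

section
/- Let τ > 0, ε > 0, and α ∈ (−∞, 1). Then there exist a sequence (λ_j) of positive real numbers with λ_j → ∞ and a sequence of complex numbers (ω_j) such that ω_j = −λ_j e^{−τ ω_j} − ε λ_j^α for every j, and Re ω_j → +∞ as j → ∞. -/
open Filter

namespace IllposedAux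
open Real

set_option maxHeartbeats 2000000 in
lemma key_root (τ ε α : ℝ) (hτ : 0 < τ) (hε : 0 < ε) (hα : α < 1) (j : ℕ) :
    ∃ (l : ℝ) (w : ℂ), (j : ℝ) ≤ l ∧ 0 < l ∧ (j : ℝ) ≤ w.re ∧
      w = -(l : ℂ) * Complex.exp (-(τ : ℂ) * w) - ((ε * l ^ α : ℝ) : ℂ) := by
  have hjnn : (0:ℝ) ≤ (j:ℝ) := Nat.cast_nonneg j
  obtain ⟨β, hβdef⟩ : ∃ β : ℝ, β = max α 0 := ⟨_, rfl⟩
  have hβ0 : 0 ≤ β := hβdef ▸ le_max_right _ _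
  have hβ1 : β < 1 := hβdef ▸ max_lt hα one_pos
  obtain ⟨X, hXdef⟩ : ∃ X : ℝ, X = 4 * ε * Real.exp (τ * j) := ⟨_, rfl⟩
  have hXpos : 0 < X := by rw [hXdef]; positivity
  obtain ⟨C, hCdef⟩ : ∃ C : ℝ, C = X ^ (1 / (1 - β)) + 4 * j + 1 := ⟨_, rfl⟩
  have hXr : 0 ≤ X ^ (1 / (1 - β)) := Real.rpow_nonneg hXpos.le _
  have hC1 : 1 ≤ C := by rw [hCdef]; linarith
  have hC0 : 0 < C := by linarith
  -- choose δ
  obtain ⟨δ, hδdef⟩ : ∃ δ : ℝ, δ = min (1/2) (2 / (τ * (C + 1))) := ⟨_, rfl⟩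
  have hδpos : 0 < δ := hδdef ▸ lt_min (by norm_num) (by positivity)
  have hδhalf : δ ≤ 1/2 := hδdef ▸ min_le_left _ _
  have hsinpos : 0 < Real.sin δ :=
    Real.sin_pos_of_pos_of_lt_pi hδpos (by nlinarith [Real.pi_gt_three])
  have hsinle : Real.sin δ ≤ δ := Real.sin_le hδpos.le
  obtain ⟨y, hydef⟩ : ∃ y : ℝ, y = (Real.pi - δ) / τ := ⟨_, rfl⟩
  have hy2 : 2 / τ ≤ y := by
    rw [hydef]; gcongr; · nlinarith [Real.pi_gt_three]
  have hypos : 0 < y := lt_of_lt_of_le (by positivity) hy2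
  obtain ⟨c, hcdef⟩ : ∃ c : ℝ, c = y / Real.sin δ := ⟨_, rfl⟩
  have hcpos : 0 < c := hcdef ▸ div_pos hypos hsinpos
  -- c is large
  have hcC : C + 1 ≤ c := by
    have h1 : δ ≤ 2 / (τ * (C + 1)) := hδdef ▸ min_le_right _ _
    have h2 : τ * (C + 1) * δ ≤ 2 := by
      rw [le_div_iff₀ (by positivity)] at h1; linarith
    have h4 : (C + 1) * Real.sin δ ≤ 2 / τ := by
      rw [le_div_iff₀ hτ]; nlinarith [hsinpos]
    calc C + 1 = ((C+1) * Real.sin δ) / Real.sin δ := by field_simp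
      _ ≤ (2/τ) / Real.sin δ := by gcongr
      _ ≤ y / Real.sin δ := by gcongr
      _ = c := hcdef.symm
  have hc1 : 1 ≤ c := by linarith
  have hcosδ : 1/2 ≤ Real.cos δ := by
    have := Real.one_sub_sq_div_two_le_cos (x := δ)
    nlinarith
  -- the function g
  obtain ⟨g, hgdef⟩ : ∃ g : ℝ → ℝ,
      g = fun x => c * Real.cos δ - ε * (c * Real.exp (τ * x)) ^ α - x := ⟨_, rfl⟩
  have hbase : ∀ x : ℝ, 0 < c * Real.exp (τ * x) := fun x => by positivity
  have hgcont : Continuous g := by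
    rw [hgdef]
    apply Continuous.sub (Continuous.sub continuous_const ?_) continuous_id
    exact continuous_const.mul
      (Continuous.rpow_const
        (continuous_const.mul (Real.continuous_exp.comp (continuous_const.mul continuous_id)))
        (fun x => Or.inl (hbase x).ne'))
  -- c^(1-β) ≥ X
  have hXc : X ≤ c ^ (1 - β) := by
    have h1 : X ^ (1 / (1 - β)) ≤ c := by rw [hCdef] at hcC; linarith
    have h2 : (X ^ (1 / (1 - β))) ^ (1 - β) ≤ c ^ (1 - β) :=
      Real.rpow_le_rpow (Real.rpow_nonneg hXpos.le _) h1 (by linarith)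
    rwa [← Real.rpow_mul hXpos.le, one_div, inv_mul_cancel₀ (by linarith), Real.rpow_one] at h2
  -- g j ≥ 0
  have hgj : 0 ≤ g (j : ℝ) := by
    have hb1 : 1 ≤ c * Real.exp (τ * j) := by
      have := Real.one_le_exp (show (0:ℝ) ≤ τ * j by positivity)
      nlinarith
    have h1 : (c * Real.exp (τ * j)) ^ α ≤ (c * Real.exp (τ * j)) ^ β :=
      Real.rpow_le_rpow_of_exponent_le hb1 (hβdef ▸ le_max_left _ _)
    have h2 : (c * Real.exp (τ * j)) ^ β = c ^ β * (Real.exp (τ * j)) ^ β :=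
      Real.mul_rpow hcpos.le (Real.exp_pos _).le
    have h3 : (Real.exp (τ * j)) ^ β ≤ Real.exp (τ * j) := by
      rw [Real.rpow_def_of_pos (Real.exp_pos _), Real.log_exp, Real.exp_le_exp]
      nlinarith [mul_nonneg (mul_nonneg hτ.le hjnn) (by linarith : (0:ℝ) ≤ 1 - β)]
    have h4 : ε * (c ^ β * Real.exp (τ * j)) ≤ c / 4 := by
      have h5 : X * c ^ β ≤ c ^ (1 - β) * c ^ β := by
        have : 0 ≤ c ^ β := Real.rpow_nonneg hcpos.le _
        nlinarith
      rw [← Real.rpow_add hcpos] at h5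
      have h6 : (1 - β) + β = (1:ℝ) := by ring
      rw [h6, Real.rpow_one, hXdef] at h5
      nlinarith [Real.rpow_nonneg hcpos.le β, Real.exp_pos (τ * j)]
    have hcj : (j:ℝ) ≤ c / 4 := by rw [hCdef] at hcC; linarith
    have h6 : ε * (c * Real.exp (τ * j)) ^ α ≤ c / 4 := by
      calc ε * (c * Real.exp (τ * j)) ^ α ≤ ε * (c ^ β * (Real.exp (τ * j)) ^ β) := by
            rw [← h2]; exact mul_le_mul_of_nonneg_left h1 hε.le
        _ ≤ ε * (c ^ β * Real.exp (τ * j)) := by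
            have h7 : 0 ≤ c ^ β := Real.rpow_nonneg hcpos.le _
            have := mul_le_mul_of_nonneg_left h3 h7
            nlinarith
        _ ≤ c / 4 := h4
    rw [hgdef]
    simp only
    nlinarith
  -- g is ≤ 0 at the right endpoint
  obtain ⟨B, hBdef⟩ : ∃ B : ℝ, B = max (j : ℝ) c := ⟨_, rfl⟩
  have hgB : g B ≤ 0 := by
    have h1 : 0 ≤ ε * (c * Real.exp (τ * B)) ^ α := by
      have := Real.rpow_nonneg (hbase B).le α
      positivity
    have h2 : c ≤ B := hBdef ▸ le_max_right _ _
    have h3 : c * Real.cos δ ≤ c := by nlinarith [Real.cos_le_one δ]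
    rw [hgdef]; simp only
    nlinarith
  -- IVT
  have hjB : (j : ℝ) ≤ B := hBdef ▸ le_max_left _ _
  have hIVT := intermediate_value_Icc' hjB (hgcont.continuousOn (s := Set.Icc (j:ℝ) B))
  have h0mem : (0:ℝ) ∈ Set.Icc (g B) (g (j:ℝ)) := ⟨hgB, hgj⟩
  obtain ⟨x, hxmem, hgx⟩ := hIVT h0mem
  obtain ⟨hxj, _⟩ := hxmem
  -- assemble
  obtain ⟨l, hldef⟩ : ∃ l : ℝ, l = c * Real.exp (τ * x) := ⟨_, rfl⟩
  have hlpos : 0 < l := hldef ▸ hbase x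
  refine ⟨l, (x : ℂ) + (y : ℂ) * Complex.I, ?_, hlpos, ?_, ?_⟩
  · have h1 : 1 ≤ Real.exp (τ * x) := Real.one_le_exp (mul_nonneg hτ.le (hjnn.trans hxj))
    have hcj : (j:ℝ) ≤ c := by rw [hCdef] at hcC; linarith
    rw [hldef]; nlinarith
  · simpa using hxj
  · -- verify the characteristic equation
    rw [hgdef] at hgx
    simp only at hgx
    have hre : c * Real.cos δ - ε * l ^ α = x := by rw [hldef]; linarith
    have him : c * Real.sin δ = y := by
      rw [hcdef]; field_simp
    have hτy : τ * y = Real.pi - δ := by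
      rw [hydef]; field_simp
    have hexp : Complex.exp (-(τ:ℂ) * ((x : ℂ) + (y : ℂ) * Complex.I)) =
        ((Real.exp (-(τ * x)) : ℝ) : ℂ) *
          (((Real.cos (τ * y) : ℝ) : ℂ) - ((Real.sin (τ * y) : ℝ) : ℂ) * Complex.I) := by
      have harg : -(τ:ℂ) * ((x : ℂ) + (y : ℂ) * Complex.I) =
          ((-(τ * x) : ℝ) : ℂ) + ((-(τ * y) : ℝ) : ℂ) * Complex.I := by
        push_cast; ring
      rw [harg, Complex.exp_add, Complex.exp_mul_I, ← Complex.ofReal_exp, ← Complex.ofReal_cos, ← Complex.ofReal_sin]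
      push_cast [Real.cos_neg, Real.sin_neg]
      ring
    rw [hexp]
    have hlc : (l : ℝ) * Real.exp (-(τ * x)) = c := by
      rw [hldef, Real.exp_neg]
      field_simp
    have hcosty : Real.cos (τ * y) = -Real.cos δ := by
      rw [hτy, Real.cos_pi_sub]
    have hsinty : Real.sin (τ * y) = Real.sin δ := by
      rw [hτy, Real.sin_pi_sub]
    rw [hcosty, hsinty]
    have goal2 : ((x : ℂ) + (y : ℂ) * Complex.I) =
        ((c * Real.cos δ - ε * l ^ α : ℝ) : ℂ) + ((c * Real.sin δ : ℝ) : ℂ) * Complex.I := by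
      rw [hre, him]
    rw [goal2, ← hlc]
    push_cast
    ring
  

end IllposedAux

open IllposedAux in
/-- Ill-posedness of the lower-order regularized delay heat equation: there are
eigenvalues `λ_j → ∞` and characteristic roots `ω_j` with `Re ω_j → ∞` satisfying
`ω_j = -λ_j e^{-τ ω_j} - ε λ_j^α`. -/
theorem illposedness_characteristic_roots (τ ε α : ℝ)
    (hτ : 0 < τ) (hε : 0 < ε) (hα : α < 1) :
    ∃ (lam : ℕ → ℝ) (ω : ℕ → ℂ),
      (∀ j, 0 < lam j) ∧
      Tendsto lam atTop atTop ∧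
      (∀ j, ω j = -(lam j : ℂ) * Complex.exp (-(τ : ℂ) * ω j) - ((ε * lam j ^ α : ℝ) : ℂ)) ∧
      Tendsto (fun j => (ω j).re) atTop atTop := by
  choose l w hjl hlpos hjw heq using key_root τ ε α hτ hε hα
  refine ⟨l, w, hlpos, ?_, heq, ?_⟩
  · exact tendsto_atTop_mono hjl tendsto_natCast_atTop_atTop
  · exact tendsto_atTop_mono hjw tendsto_natCast_atTop_atTop
end

section
/- Let τ > 0, ε > 0, α < 1, Λ > 0, and let v : (Λ, ∞) → ℂ be differentiable with v(λ) e^{τ v(λ)} = −λ e^{τ ε λ^α} for all λ > Λ. Assume Re v(λ) → +∞ as λ → ∞ and that Im v(λ) remains bounded as λ → ∞. Then |v(λ)|/λ → 0 as λ → ∞, and consequently Re v(λ) − ε λ^α = (1/τ) ln(λ/|v(λ)|) → +∞ as λ → ∞. -/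
open Filter Set Topology

/-!
Taking absolute values in `v e^{τ v} = -λ e^{τ ε λ^α}` gives the exact identity
`Re v - ε λ^α = τ⁻¹ log (λ / |v|)`. Once `Re v ≥ 1` the logarithm is at most `log λ`, so
`|v| ≤ Re v + M ≤ ε λ^α + τ⁻¹ log λ + M = o(λ)` because `α < 1`. Hence `λ / |v| → ∞`, and
the identity turns this into `Re v - ε λ^α → ∞`.
-/

theorem Complex.re_sub_eq_log_div_norm_of_mul_exp_eq {τ lam a : ℝ} {v : ℂ} (hτ : τ ≠ 0)
    (hlam : 0 < lam)
    (h : v * Complex.exp (τ * v) = -(lam : ℂ) * (Real.exp (τ * a) : ℂ)) :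
    v.re - a = 1 / τ * Real.log (lam / ‖v‖) := by
  have hnorm : ‖v‖ * Real.exp (τ * v.re) = lam * Real.exp (τ * a) := by
    simpa [Complex.norm_exp, abs_of_pos hlam] using congrArg (‖·‖) h
  have hv : 0 < ‖v‖ := by
    by_contra! hv
    have : ‖v‖ = 0 := le_antisymm hv (norm_nonneg v)
    rw [this, zero_mul] at hnorm
    exact (mul_pos hlam (Real.exp_pos _)).ne' hnorm.symm
  have hlog := congrArg Real.log hnorm
  rw [Real.log_mul hv.ne' (Real.exp_pos _).ne', Real.log_mul hlam.ne' (Real.exp_pos _).ne',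
    Real.log_exp, Real.log_exp] at hlog
  rw [Real.log_div hlam.ne' hv.ne']
  field_simp
  linarith

theorem Complex.re_le_add_log_of_re_sub_eq_log_div_norm {τ lam a : ℝ} {v : ℂ} (hτ : 0 < τ)
    (hlam : 0 < lam) (hv : 1 ≤ ‖v‖) (h : v.re - a = 1 / τ * Real.log (lam / ‖v‖)) :
    v.re ≤ a + 1 / τ * Real.log lam := by
  have hlog : Real.log (lam / ‖v‖) ≤ Real.log lam :=
    Real.log_le_log (by positivity) (div_le_self hlam.le hv)
  have := mul_le_mul_of_nonneg_left hlog (one_div_pos.2 hτ).le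
  linarith

theorem tendsto_rpow_add_log_add_const_div_atTop {α : ℝ} (hα : α < 1) (a b c : ℝ) :
    Tendsto (fun x => (a * x ^ α + b * Real.log x + c) / x) atTop (𝓝 0) := by
  have hpow : Tendsto (fun x : ℝ => a * x ^ α / x) atTop (𝓝 0) := by
    have h := (tendsto_rpow_neg_atTop (sub_pos.2 hα)).const_mul a
    rw [mul_zero] at h
    refine h.congr' ?_
    filter_upwards [eventually_gt_atTop 0] with x hx
    rw [neg_sub, Real.rpow_sub hx, Real.rpow_one, mul_div_assoc]
  have hlog : Tendsto (fun x : ℝ => b * Real.log x / x) atTop (𝓝 0) := by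
    have h := Real.isLittleO_log_id_atTop.tendsto_div_nhds_zero.const_mul b
    rw [mul_zero] at h
    exact h.congr fun x => (mul_div_assoc _ _ _).symm
  have hconst : Tendsto (fun x : ℝ => c / x) atTop (𝓝 0) :=
    tendsto_const_nhds.div_atTop tendsto_id
  simpa only [add_div, add_zero] using (hpow.add hlog).add hconst

theorem tendsto_log_div_atTop_of_div_tendsto_zero {f : ℝ → ℝ} (hf : ∀ᶠ x in atTop, 0 < f x)
    (h : Tendsto (fun x => f x / x) atTop (𝓝 0)) :
    Tendsto (fun x => Real.log (x / f x)) atTop atTop := by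
  have hpos : ∀ᶠ x in atTop, f x / x ∈ Ioi (0 : ℝ) := by
    filter_upwards [hf, eventually_gt_atTop 0] with x hfx hx
    exact div_pos hfx hx
  have hinv := (tendsto_nhdsWithin_iff.2 ⟨h, hpos⟩).inv_tendsto_nhdsGT_zero
  refine (Real.tendsto_log_atTop.comp hinv).congr fun x => ?_
  simp only [Function.comp_apply, Pi.inv_apply, inv_div]

theorem transformed_char_branch_re_growth_general (τ ε α Λ : ℝ)
    (hτ : 0 < τ) (hα : α < 1) (hΛ : 0 < Λ)
    (v : ℝ → ℂ)
    (heq : ∀ lam ∈ Ioi Λ,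
      v lam * Complex.exp ((τ : ℂ) * v lam) = -(lam : ℂ) * (Real.exp (τ * ε * lam ^ α) : ℂ))
    (hre : Tendsto (fun lam => (v lam).re) atTop atTop)
    (him : ∃ M : ℝ, ∀ lam ∈ Ioi Λ, |(v lam).im| ≤ M) :
    Tendsto (fun lam => ‖v lam‖ / lam) atTop (nhds 0) ∧
    (∀ lam ∈ Ioi Λ,
      (v lam).re - ε * lam ^ α = (1 / τ) * Real.log (lam / ‖v lam‖)) ∧
    Tendsto (fun lam => (v lam).re - ε * lam ^ α) atTop atTop := by
  obtain ⟨M, hM⟩ := him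
  have hkey : ∀ lam ∈ Ioi Λ, (v lam).re - ε * lam ^ α = 1 / τ * Real.log (lam / ‖v lam‖) :=
    fun lam hlam => Complex.re_sub_eq_log_div_norm_of_mul_exp_eq hτ.ne' (hΛ.trans hlam)
      (by rw [← mul_assoc]; exact heq lam hlam)
  have hlarge : ∀ᶠ lam in atTop, lam ∈ Ioi Λ ∧ 1 ≤ (v lam).re :=
    (eventually_gt_atTop Λ).and (hre.eventually_ge_atTop 1)
  have hbound : ∀ᶠ lam in atTop,
      ‖v lam‖ / lam ≤ (ε * lam ^ α + 1 / τ * Real.log lam + M) / lam := by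
    filter_upwards [hlarge] with lam ⟨hlam, hre1⟩
    have hnorm : ‖v lam‖ ≤ (v lam).re + M := by
      have := Complex.norm_le_abs_re_add_abs_im (v lam)
      rw [abs_of_pos (by linarith)] at this
      linarith [hM lam hlam]
    have hre_le := Complex.re_le_add_log_of_re_sub_eq_log_div_norm hτ (hΛ.trans hlam)
      (hre1.trans (Complex.re_le_norm _)) (hkey lam hlam)
    exact div_le_div_of_nonneg_right (by linarith) (hΛ.trans hlam).le
  have hsmall : Tendsto (fun lam => ‖v lam‖ / lam) atTop (𝓝 0) :=
    squeeze_zero' (by filter_upwards [eventually_gt_atTop 0] with lam hlam; positivity) hbound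
      (tendsto_rpow_add_log_add_const_div_atTop hα _ _ _)
  have hnorm_pos : ∀ᶠ lam in atTop, 0 < ‖v lam‖ := by
    filter_upwards [hlarge] with lam ⟨_, hre1⟩
    exact one_pos.trans_le (hre1.trans (Complex.re_le_norm _))
  refine ⟨hsmall, hkey, ?_⟩
  refine ((tendsto_log_div_atTop_of_div_tendsto_zero hnorm_pos hsmall).const_mul_atTop
    (one_div_pos.2 hτ)).congr' ?_
  filter_upwards [eventually_gt_atTop Λ] with lam hlam
  exact (hkey lam hlam).symm

/-- If `Re v(λ) → ∞` and `Im v(λ)` stays bounded along a differentiable branch of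
solutions of the transformed characteristic equation `v e^{τ v} = -λ e^{τ ε λ^α}`, then
`|v(λ)|/λ → 0` and consequently `Re v(λ) - ε λ^α = (1/τ) ln(λ/|v(λ)|) → ∞`. -/
theorem transformed_char_branch_re_growth (τ ε α Λ : ℝ)
    (hτ : 0 < τ) (hε : 0 < ε) (hα : α < 1) (hΛ : 0 < Λ)
    (v : ℝ → ℂ)
    (hdiff : ∀ lam ∈ Ioi Λ, DifferentiableAt ℝ v lam)
    (heq : ∀ lam ∈ Ioi Λ,
      v lam * Complex.exp ((τ : ℂ) * v lam) = -(lam : ℂ) * (Real.exp (τ * ε * lam ^ α) : ℂ))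
    (hre : Tendsto (fun lam => (v lam).re) atTop atTop)
    (him : ∃ M : ℝ, ∀ lam ∈ Ioi Λ, |(v lam).im| ≤ M) :
    Tendsto (fun lam => ‖v lam‖ / lam) atTop (nhds 0) ∧
    (∀ lam ∈ Ioi Λ,
      (v lam).re - ε * lam ^ α = (1 / τ) * Real.log (lam / ‖v lam‖)) ∧
    Tendsto (fun lam => (v lam).re - ε * lam ^ α) atTop atTop :=
  transformed_char_branch_re_growth_general τ ε α Λ hτ hα hΛ v heq hre him
end

section
/- Let m ∈ ℕ with m ≥ 2, τ > 0, ε > 0, α < 1, and set β := tan(π/(2m)) > 0. Define f₁(x) := ε e^{α τ x} (sin(τ β x))^{1−α} and f₂(x) := (1 + β²)^{m(1−α)} x^{2m(1−α)} (−cos(τ β x)). Then for every k ∈ ℕ there exists x_k in the open interval ((π + 4kπ)/(2τβ), (π + 2kπ)/(τβ)) such that f₁(x_k) = f₂(x_k); moreover, at such x_k one has sin(τ β x_k) > 0 and cos(τ β x_k) < 0. In particular, the equation f₁(x) = f₂(x) has infinitely many solutions and the solutions x_k tend to ∞ as k → ∞. -/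
open Real Filter Set

/-- For the `m`-th order equation (`m ≥ 2`), with `β = tan(π/(2m)) > 0`, the equation
`f₁(x) = f₂(x)` with `f₁(x) = ε e^{ατx} (sin(τβx))^{1-α}` and
`f₂(x) = (1+β²)^{m(1-α)} x^{2m(1-α)} (-cos(τβx))` has a root `x_k` in each interval
`((π + 4kπ)/(2τβ), (π + 2kπ)/(τβ))`, where `sin(τβx_k) > 0` and `cos(τβx_k) < 0`;
in particular there are infinitely many solutions and they tend to `∞`. -/
theorem higher_order_root_equation (m : ℕ) (hm : 2 ≤ m) (τ ε α : ℝ)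
    (hτ : 0 < τ) (hε : 0 < ε) (hα : α < 1)
    (β : ℝ) (hβ : β = Real.tan (π / (2 * m))) :
    0 < β ∧
    ∃ x : ℕ → ℝ,
      (∀ k : ℕ,
        x k ∈ Ioo ((π + 4 * k * π) / (2 * τ * β)) ((π + 2 * k * π) / (τ * β)) ∧
        ε * Real.exp (α * τ * x k) * Real.sin (τ * β * x k) ^ (1 - α)
          = (1 + β ^ 2) ^ ((m : ℝ) * (1 - α)) * x k ^ (2 * (m : ℝ) * (1 - α))
            * (-Real.cos (τ * β * x k)) ∧
        0 < Real.sin (τ * β * x k) ∧ Real.cos (τ * β * x k) < 0) ∧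
      Tendsto x atTop atTop := by
  have hm0 : (0:ℝ) < m := by positivity
  have hm1 : (2:ℝ) ≤ m := by exact_mod_cast hm
  have hβpos : 0 < β := by
    rw [hβ]
    apply Real.tan_pos_of_pos_of_lt_pi_div_two
    · positivity
    · rw [div_lt_div_iff₀ (by positivity) (by norm_num)]
      nlinarith [Real.pi_pos]
  have hc : 0 < τ * β := mul_pos hτ hβpos
  set c := τ * β with hcdef
  have h1α : (0:ℝ) < 1 - α := by linarith
  set f₁ : ℝ → ℝ := fun x => ε * Real.exp (α * τ * x) * Real.sin (c * x) ^ (1 - α) with hf₁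
  set f₂ : ℝ → ℝ := fun x =>
    (1 + β ^ 2) ^ ((m : ℝ) * (1 - α)) * x ^ (2 * (m : ℝ) * (1 - α)) * (-Real.cos (c * x))
    with hf₂
  have hgcont : Continuous (fun x => f₂ x - f₁ x) := by
    apply Continuous.sub
    · apply Continuous.mul
      · exact continuous_const.mul (continuous_id.rpow_const
          (fun x => Or.inr (by nlinarith [mul_nonneg hm0.le h1α.le])))
      · exact ((Real.continuous_cos.comp (continuous_const.mul continuous_id)).neg)
    · apply Continuous.mul
      · exact continuous_const.mul (Real.continuous_exp.comp (continuous_const.mul continuous_id))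
      · exact ((Real.continuous_sin.comp (continuous_const.mul continuous_id)).rpow_const
          (fun x => Or.inr (by linarith)))
  have key : ∀ k : ℕ, ∃ y ∈ Ioo ((π + 4 * k * π) / (2 * c)) ((π + 2 * k * π) / c),
      f₁ y = f₂ y := by
    intro k
    set a := (π + 4 * k * π) / (2 * c) with ha
    set b := (π + 2 * k * π) / c with hb
    have hπ := Real.pi_pos
    have hab : a ≤ b := by
      rw [ha, hb, div_le_div_iff₀ (by positivity) hc]
      nlinarith [hπ, Nat.cast_nonneg (α := ℝ) k]
    have hca : c * a = π / 2 + k * (2 * π) := by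
      rw [ha]; field_simp; ring
    have hcb : c * b = π + k * (2 * π) := by
      rw [hb]; field_simp
    have hsa : Real.sin (c * a) = 1 := by
      rw [hca, Real.sin_add_nat_mul_two_pi, Real.sin_pi_div_two]
    have hcosa : Real.cos (c * a) = 0 := by
      rw [hca, Real.cos_add_nat_mul_two_pi, Real.cos_pi_div_two]
    have hsb : Real.sin (c * b) = 0 := by
      rw [hcb, Real.sin_add_nat_mul_two_pi, Real.sin_pi]
    have hcosb : Real.cos (c * b) = -1 := by
      rw [hcb, Real.cos_add_nat_mul_two_pi, Real.cos_pi]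
    have hbpos : 0 < b := by rw [hb]; positivity
    have hga : f₂ a - f₁ a < 0 := by
      have : f₁ a = ε * Real.exp (α * τ * a) := by
        rw [hf₁]; simp only [hsa, Real.one_rpow, mul_one]
      have h2 : f₂ a = 0 := by
        rw [hf₂]; simp [hcosa]
      rw [h2, this]
      have := Real.exp_pos (α * τ * a)
      nlinarith
    have hgb : 0 < f₂ b - f₁ b := by
      have h1 : f₁ b = 0 := by
        rw [hf₁]; simp [hsb, Real.zero_rpow (by linarith : (1:ℝ) - α ≠ 0)]
      have h2 : 0 < f₂ b := by
        have he : f₂ b = (1 + β ^ 2) ^ ((m : ℝ) * (1 - α)) * b ^ (2 * (m : ℝ) * (1 - α)) := by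
          simp [hf₂, hcosb]
        rw [he]
        exact mul_pos (Real.rpow_pos_of_pos (by positivity) _)
          (Real.rpow_pos_of_pos hbpos _)
      rw [h1]; linarith
    have := intermediate_value_Ioo hab hgcont.continuousOn
      (show (0:ℝ) ∈ Ioo (f₂ a - f₁ a) (f₂ b - f₁ b) from ⟨hga, hgb⟩)
    obtain ⟨y, hy, hy0⟩ := this
    exact ⟨y, hy, by linarith [sub_eq_zero.mp hy0]⟩
  refine ⟨hβpos, fun k => (key k).choose, fun k => ?_, ?_⟩
  · obtain ⟨hmem, heq⟩ := (key k).choose_spec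
    set y := (key k).choose
    have hπ := Real.pi_pos
    have hy1 : π / 2 + k * (2 * π) < c * y := by
      have := hmem.1
      calc π / 2 + k * (2 * π) = c * ((π + 4 * k * π) / (2 * c)) := by field_simp; ring
        _ < c * y := by exact (mul_lt_mul_iff_right₀ hc).mpr this
    have hy2 : c * y < π + k * (2 * π) := by
      have := hmem.2
      calc c * y < c * ((π + 2 * k * π) / c) := (mul_lt_mul_iff_right₀ hc).mpr this
        _ = π + k * (2 * π) := by field_simp
    have hsin : Real.sin (c * y) = Real.sin (c * y - k * (2 * π)) := by
      rw [← Real.sin_add_nat_mul_two_pi (c * y - k * (2 * π)) k]; congr 1; ring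
    have hcos : Real.cos (c * y) = Real.cos (c * y - k * (2 * π)) := by
      rw [← Real.cos_add_nat_mul_two_pi (c * y - k * (2 * π)) k]; congr 1; ring
    refine ⟨?_, heq, ?_, ?_⟩
    · show y ∈ Ioo ((π + 4 * k * π) / (2 * τ * β)) ((π + 2 * k * π) / c)
      rw [show 2 * τ * β = 2 * c by rw [hcdef]; ring]
      exact hmem
    · show 0 < Real.sin (c * y)
      rw [hsin]
      exact Real.sin_pos_of_pos_of_lt_pi (by linarith) (by linarith)
    · show Real.cos (c * y) < 0
      rw [hcos]
      exact Real.cos_neg_of_pi_div_two_lt_of_lt (by linarith) (by linarith)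
  · apply tendsto_atTop_mono (f := fun k : ℕ => (k : ℝ) * (2 * π / c))
    · intro k
      have hmem := ((key k).choose_spec).1
      have hπ := Real.pi_pos
      have h1 : (k : ℝ) * (2 * π / c) ≤ (π + 4 * k * π) / (2 * c) := by
        rw [le_div_iff₀ (by positivity : (0:ℝ) < 2 * c)]
        have he : (k : ℝ) * (2 * π / c) * (2 * c) = 4 * k * π := by
          field_simp; ring
        rw [he]; linarith
      exact le_trans h1 (le_of_lt hmem.1)
    · exact Tendsto.atTop_mul_const (by positivity)
        (tendsto_natCast_atTop_atTop)
end

section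
/- Let m ∈ ℕ with m ≥ 2, τ > 0, ε > 0, and α < 1. Then there exist a sequence (λ_k) of positive real numbers with λ_k → ∞ and a sequence of complex numbers (ω_k) with Re ω_k → +∞ such that ω_k^m + ε λ_k^α = −λ_k e^{−τ ω_k} for every k. -/
/-!
Fix `Re ω = x` and let `ω = x + iy` run over `y ∈ [π/(2τ), π/τ]`. The imaginary part of the
equation determines `λ = e^{τx} Im(ω^m) / sin(τy)`. For `x` large, `ω^m` stays in the closed first
quadrant, so the real part of the equation multiplied by `sin(τy)` is a function of `y` which is
continuous on the whole closed interval (this uses `α < 1`), positive at `y = π/(2τ)` and equal to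
`-Im(ω^m) < 0` at `y = π/τ`. The intermediate value theorem gives a root, and there
`λ ≥ Im(ω^m) ≥ (π/(2τ)) x`.
-/

open Filter Real Set

namespace Complex

@[simp]
theorem re_ofReal_add_ofReal_mul_I (x y : ℝ) : ((x : ℂ) + y * I).re = x := by simp

@[simp]
theorem im_ofReal_add_ofReal_mul_I (x y : ℝ) : ((x : ℂ) + y * I).im = y := by simp

theorem pow_eq_norm_pow_mul_exp (z : ℂ) (n : ℕ) :
    z ^ n = ((‖z‖ ^ n : ℝ) : ℂ) * exp (((n * arg z : ℝ) : ℂ) * I) := by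
  conv_lhs => rw [← norm_mul_exp_arg_mul_I z]
  rw [mul_pow, ← exp_nat_mul]
  push_cast
  ring_nf

theorem re_pow_eq_norm_pow_mul_cos (z : ℂ) (n : ℕ) :
    (z ^ n).re = ‖z‖ ^ n * Real.cos (n * arg z) := by
  rw [pow_eq_norm_pow_mul_exp, re_ofReal_mul, exp_ofReal_mul_I_re]

theorem im_pow_eq_norm_pow_mul_sin (z : ℂ) (n : ℕ) :
    (z ^ n).im = ‖z‖ ^ n * Real.sin (n * arg z) := by
  rw [pow_eq_norm_pow_mul_exp, im_ofReal_mul, exp_ofReal_mul_I_im]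

variable {z : ℂ} {n : ℕ}

theorem re_pow_nonneg_of_arg (h₀ : 0 ≤ arg z) (h : n * arg z ≤ π / 2) : 0 ≤ (z ^ n).re := by
  rw [re_pow_eq_norm_pow_mul_cos]
  exact mul_nonneg (by positivity) (Real.cos_nonneg_of_mem_Icc ⟨by nlinarith [pi_pos], h⟩)

theorem norm_pow_pred_mul_im_le_im_pow (hn : n ≠ 0) (h₀ : 0 ≤ arg z) (h : n * arg z ≤ π / 2) :
    ‖z‖ ^ (n - 1) * z.im ≤ (z ^ n).im := by
  have hθ : arg z ≤ n * arg z :=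
    le_mul_of_one_le_left h₀ (by exact_mod_cast Nat.one_le_iff_ne_zero.2 hn)
  calc ‖z‖ ^ (n - 1) * z.im = ‖z‖ ^ n * Real.sin (arg z) := by
        rw [← norm_mul_sin_arg z, ← mul_assoc, ← pow_succ,
          Nat.sub_add_cancel (Nat.one_le_iff_ne_zero.2 hn)]
    _ ≤ ‖z‖ ^ n * Real.sin (n * arg z) := by
        gcongr
        exact Real.sin_le_sin_of_le_of_le_pi_div_two (by linarith [pi_pos]) h hθ
    _ = (z ^ n).im := (im_pow_eq_norm_pow_mul_sin z n).symm

theorem arg_le_of_im_le_re_mul_sin {θ : ℝ} (hre : 0 ≤ z.re) (hθ₀ : 0 ≤ θ) (hθ : θ < π / 2)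
    (h : z.im ≤ z.re * Real.sin θ) : arg z ≤ θ := by
  rcases eq_or_ne z 0 with rfl | hz
  · simpa using hθ₀
  rw [arg_of_re_nonneg hre, Real.arcsin_le_iff_le_sin' ⟨by linarith, hθ⟩,
    div_le_iff₀ (norm_pos_iff.2 hz), mul_comm (Real.sin θ)]
  have hsin : 0 ≤ Real.sin θ := Real.sin_nonneg_of_nonneg_of_le_pi hθ₀ (by linarith)
  exact h.trans (mul_le_mul_of_nonneg_right (re_le_norm z) hsin)

theorem mul_arg_le_pi_div_two_of_im_le (hn : 2 ≤ n) (hre : 0 ≤ z.re)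
    (h : z.im ≤ z.re * Real.sin (π / (2 * n))) : n * arg z ≤ π / 2 := by
  have hn' : (2 : ℝ) ≤ n := by exact_mod_cast hn
  have harg := arg_le_of_im_le_re_mul_sin hre (by positivity)
    (by rw [div_lt_div_iff₀ (by positivity) two_pos]; nlinarith [pi_pos]) h
  calc n * arg z ≤ n * (π / (2 * n)) := by gcongr
    _ = π / 2 := by field_simp

theorem re_pow_nonneg_and_im_pow_ge_of_im_le (hn : 2 ≤ n) (hre : 0 ≤ z.re) (him : 0 ≤ z.im)
    (h : z.im ≤ z.re * Real.sin (π / (2 * n))) :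
    0 ≤ (z ^ n).re ∧ ‖z‖ ^ (n - 1) * z.im ≤ (z ^ n).im := by
  have harg₀ : 0 ≤ arg z := arg_nonneg_iff.2 him
  have harg := mul_arg_le_pi_div_two_of_im_le hn hre h
  exact ⟨re_pow_nonneg_of_arg harg₀ harg, norm_pow_pred_mul_im_le_im_pow (by omega) harg₀ harg⟩

end Complex

theorem char_eq_iff (m : ℕ) (τ c l : ℝ) (ω : ℂ) :
    ω ^ m + (c : ℂ) = -(l : ℂ) * Complex.exp (-(τ : ℂ) * ω) ↔
      (ω ^ m).re + c = -(l * exp (-(τ * ω.re)) * cos (τ * ω.im)) ∧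
      (ω ^ m).im = l * exp (-(τ * ω.re)) * sin (τ * ω.im) := by
  simp [Complex.ext_iff, Complex.exp_re, Complex.exp_im, mul_assoc]

/- `charEigenvalue` is the `λ` solving the imaginary part of the characteristic equation at `ω`;
`charResidual` is `sin (τ * ω.im)` times the real part with this `λ`, rewritten so that it stays
continuous where `sin (τ * ω.im)` vanishes. -/
noncomputable def charEigenvalue (m : ℕ) (τ : ℝ) (ω : ℂ) : ℝ :=
  (ω ^ m).im * exp (τ * ω.re) / sin (τ * ω.im)

noncomputable def charResidual (m : ℕ) (τ ε α : ℝ) (ω : ℂ) : ℝ :=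
  sin (τ * ω.im) * (ω ^ m).re
    + ε * ((ω ^ m).im * exp (τ * ω.re)) ^ α * sin (τ * ω.im) ^ (1 - α)
    + (ω ^ m).im * cos (τ * ω.im)

section CharacteristicRoots

variable {m : ℕ} {τ ε α : ℝ}

theorem char_eq_of_charResidual_eq_zero {ω : ℂ} (hs : 0 < sin (τ * ω.im))
    (hQ : 0 ≤ (ω ^ m).im) (h : charResidual m τ ε α ω = 0) :
    ω ^ m + ((ε * charEigenvalue m τ ω ^ α : ℝ) : ℂ)
      = -(charEigenvalue m τ ω : ℂ) * Complex.exp (-(τ : ℂ) * ω) := by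
  rw [char_eq_iff, charEigenvalue]
  rw [charResidual, rpow_sub hs, rpow_one] at h
  have hE := exp_pos (τ * ω.re)
  have hsα := rpow_pos_of_pos hs α
  rw [div_rpow (by positivity) hs.le, exp_neg]
  constructor
  · field_simp at h ⊢
    linear_combination h
  · field_simp

theorem exists_charResidual_eq_zero (hm : 2 ≤ m) (hτ : 0 < τ) (hε : 0 < ε) (hα : α < 1) {x : ℝ}
    (hx₀ : 0 ≤ x) (hx : π / τ ≤ x * sin (π / (2 * m))) :
    ∃ y ∈ Ico (π / (2 * τ)) (π / τ), charResidual m τ ε α (x + y * Complex.I) = 0 := by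
  have hτa : τ * (π / (2 * τ)) = π / 2 := by field_simp
  have hτb : τ * (π / τ) = π := by field_simp
  set a := π / (2 * τ)
  set b := π / τ
  have hab : a ≤ b := div_le_div_of_nonneg_left pi_pos.le hτ (by linarith)
  have sector : ∀ y ∈ Icc a b,
      0 ≤ ((x + y * Complex.I) ^ m).re ∧ 0 < ((x + y * Complex.I) ^ m).im := by
    intro y hy
    have hy₀ : 0 < y := lt_of_lt_of_le (by positivity) hy.1
    have hz₀ : 0 < ‖x + y * Complex.I‖ :=
      hy₀.trans_le (by simpa using Complex.im_le_norm (x + y * Complex.I))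
    obtain ⟨hre, him⟩ := Complex.re_pow_nonneg_and_im_pow_ge_of_im_le (z := x + y * Complex.I) hm (by simpa)
      (by simpa using hy₀.le) (by simpa using hy.2.trans hx)
    refine ⟨hre, lt_of_lt_of_le ?_ him⟩
    rw [Complex.im_ofReal_add_ofReal_mul_I]
    positivity
  have hcont : ContinuousOn (fun y : ℝ ↦ charResidual m τ ε α (x + y * Complex.I)) (Icc a b) := by
    simp only [charResidual, Complex.re_ofReal_add_ofReal_mul_I,
      Complex.im_ofReal_add_ofReal_mul_I]
    refine ContinuousOn.add (ContinuousOn.add (by fun_prop) ?_) (by fun_prop)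
    refine ContinuousOn.mul (continuousOn_const.mul ?_) ?_
    · exact ContinuousOn.rpow_const (by fun_prop)
        fun y hy ↦ Or.inl (by have := (sector y hy).2; positivity)
    · exact ContinuousOn.rpow_const (by fun_prop) fun _ _ ↦ Or.inr (by linarith)
  have hGa : 0 < charResidual m τ ε α (x + a * Complex.I) := by
    obtain ⟨hre, him⟩ := sector a ⟨le_rfl, hab⟩
    simp only [charResidual, Complex.re_ofReal_add_ofReal_mul_I,
      Complex.im_ofReal_add_ofReal_mul_I, hτa, sin_pi_div_two, cos_pi_div_two, one_mul, one_rpow,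
      mul_one, mul_zero, add_zero]
    positivity
  have hGb : charResidual m τ ε α (x + b * Complex.I) < 0 := by
    have him := (sector b ⟨hab, le_rfl⟩).2
    simp only [charResidual, Complex.re_ofReal_add_ofReal_mul_I,
      Complex.im_ofReal_add_ofReal_mul_I, hτb, sin_pi, cos_pi, zero_mul,
      zero_rpow (sub_ne_zero.2 hα.ne'), mul_zero, zero_add]
    linarith
  obtain ⟨y, hy, hGy⟩ := intermediate_value_Icc' hab hcont ⟨hGb.le, hGa.le⟩
  refine ⟨y, ⟨hy.1, hy.2.lt_of_ne ?_⟩, hGy⟩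
  rintro rfl
  exact hGb.ne hGy

theorem eventually_exists_char_root (hm : 2 ≤ m) (hτ : 0 < τ) (hε : 0 < ε) (hα : α < 1) :
    ∀ᶠ x in atTop, ∃ (l : ℝ) (ω : ℂ), 0 < l ∧ π / (2 * τ) * x ≤ l ∧ ω.re = x ∧
      ω ^ m + ((ε * l ^ α : ℝ) : ℂ) = -(l : ℂ) * Complex.exp (-(τ : ℂ) * ω) := by
  have hsin : 0 < sin (π / (2 * m)) := by
    have hm' : (2 : ℝ) ≤ m := by exact_mod_cast hm
    refine sin_pos_of_pos_of_lt_pi (by positivity) ?_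
    rw [div_lt_iff₀ (by positivity)]
    nlinarith [pi_pos]
  filter_upwards [eventually_ge_atTop 1, eventually_ge_atTop (π / τ / sin (π / (2 * m)))]
    with x hx₁ hx
  rw [div_le_iff₀ hsin] at hx
  obtain ⟨y, hy, hres⟩ := exists_charResidual_eq_zero hm hτ hε hα (by linarith) hx
  set ω : ℂ := x + y * Complex.I
  have hωre : ω.re = x := Complex.re_ofReal_add_ofReal_mul_I x y
  have hωim : ω.im = y := Complex.im_ofReal_add_ofReal_mul_I x y
  have hy₀ : 0 < y := lt_of_lt_of_le (by positivity) hy.1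
  have hs : 0 < sin (τ * ω.im) := by
    rw [hωim]
    refine sin_pos_of_pos_of_lt_pi (by positivity) ?_
    calc τ * y < τ * (π / τ) := by gcongr; exact hy.2
      _ = π := by field_simp
  have hx_le_norm : x ≤ ‖ω‖ := hωre ▸ Complex.re_le_norm ω
  have hx_le_pow : x ≤ ‖ω‖ ^ (m - 1) :=
    hx_le_norm.trans (le_self_pow₀ (hx₁.trans hx_le_norm) (by omega))
  have him := (Complex.re_pow_nonneg_and_im_pow_ge_of_im_le (z := ω) hm (by linarith)
    (by rw [hωim]; exact hy₀.le) (by rw [hωre, hωim]; linarith [hy.2])).2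
  rw [hωim] at him
  have hgrowth : π / (2 * τ) * x ≤ (ω ^ m).im :=
    calc π / (2 * τ) * x ≤ y * ‖ω‖ ^ (m - 1) := mul_le_mul hy.1 hx_le_pow (by linarith) hy₀.le
      _ ≤ (ω ^ m).im := by rw [mul_comm]; exact him
  have hQ : 0 ≤ (ω ^ m).im := hgrowth.trans' (by positivity)
  have hQ_le : (ω ^ m).im ≤ charEigenvalue m τ ω := by
    rw [charEigenvalue, le_div_iff₀ hs]
    calc (ω ^ m).im * sin (τ * ω.im) ≤ (ω ^ m).im * 1 := by gcongr; exact sin_le_one _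
      _ ≤ (ω ^ m).im * exp (τ * ω.re) := by gcongr; exact one_le_exp (by rw [hωre]; positivity)
  refine ⟨charEigenvalue m τ ω, ω, ?_, hgrowth.trans hQ_le, hωre,
    char_eq_of_charResidual_eq_zero hs hQ hres⟩
  exact lt_of_lt_of_le (by positivity) (hgrowth.trans hQ_le)

end CharacteristicRoots

/-- Ill-posedness for the `m`-th order (`m ≥ 2`) lower-order regularized delay equation:
there are eigenvalues `λ_k → ∞` and characteristic roots `ω_k` with `Re ω_k → ∞`
satisfying `ω_k^m + ε λ_k^α = -λ_k e^{-τ ω_k}`. -/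
theorem higher_order_illposedness (m : ℕ) (hm : 2 ≤ m) (τ ε α : ℝ)
    (hτ : 0 < τ) (hε : 0 < ε) (hα : α < 1) :
    ∃ (lam : ℕ → ℝ) (ω : ℕ → ℂ),
      (∀ k, 0 < lam k) ∧
      Tendsto lam atTop atTop ∧
      Tendsto (fun k => (ω k).re) atTop atTop ∧
      ∀ k, ω k ^ m + ((ε * lam k ^ α : ℝ) : ℂ)
        = -(lam k : ℂ) * Complex.exp (-(τ : ℂ) * ω k) := by
  obtain ⟨X, hX⟩ := eventually_atTop.1 (eventually_exists_char_root hm hτ hε hα)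
  choose lam ω hpos hgrowth hre heq using
    fun k : ℕ ↦ hX (X + k) (le_add_of_nonneg_right k.cast_nonneg)
  have hx : Tendsto (fun k : ℕ ↦ X + k) atTop atTop :=
    tendsto_atTop_add_const_left _ X tendsto_natCast_atTop_atTop
  refine ⟨lam, ω, hpos, tendsto_atTop_mono hgrowth (hx.const_mul_atTop (by positivity)), ?_, heq⟩
  simpa only [hre] using hx
end

section
/- Let α < 1. Then there exists Λ > 0 such that for every real λ ≥ Λ there exist y₁ > 0 and y₂ ∈ [π/2, π) satisfying the system y₁² − y₂² + λ^α = −λ e^{−y₁} cos(y₂) and 2 y₁ y₂ = λ e^{−y₁} sin(y₂); equivalently, ω := y₁ + i y₂ satisfies the characteristic equation ω² + λ^α = −λ e^{−ω}. -/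
open Real Set Function Filter

/-- Extension of `x ↦ x * exp x` that is strictly monotone on all of `ℝ`. -/
noncomputable def gfun : ℝ → ℝ := fun x => if x ≤ 0 then x else x * Real.exp x

lemma gfun_strictMono : StrictMono gfun := by
  intro a b hab
  unfold gfun
  rcases le_or_gt b 0 with hb | hb
  · rw [if_pos (hab.le.trans hb), if_pos hb]; exact hab
  · rw [if_neg (not_le.2 hb)]
    rcases le_or_gt a 0 with ha | ha
    · rw [if_pos ha]
      calc a ≤ 0 := ha
        _ < b * Real.exp b := by positivity
    · rw [if_neg (not_le.2 ha)]
      have h1 : Real.exp a < Real.exp b := Real.exp_lt_exp.2 hab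
      nlinarith [Real.exp_pos a, Real.exp_pos b]

lemma gfun_continuous : Continuous gfun := by
  apply Continuous.if_le continuous_id (continuous_id.mul Real.continuous_exp)
    continuous_id continuous_const
  intro x hx
  simp only [id_eq] at hx
  simp [hx]

lemma gfun_surjective : Surjective gfun := by
  apply gfun_continuous.surjective
  · apply tendsto_atTop_mono _ tendsto_id
    intro x
    show id x ≤ gfun x
    unfold gfun
    split
    · exact le_rfl
    · next h =>
        have hx : 0 < x := not_le.1 h
        simp only [id_eq]
        nlinarith [mul_le_mul_of_nonneg_left (Real.one_le_exp hx.le) hx.le]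
  · apply Tendsto.congr' _ tendsto_id
    filter_upwards [eventually_le_atBot (0:ℝ)] with x hx
    simp [gfun, hx]

noncomputable def gIso : ℝ ≃o ℝ :=
  StrictMono.orderIsoOfSurjective gfun gfun_strictMono gfun_surjective

noncomputable def Wl : ℝ → ℝ := fun y => gIso.symm y

lemma Wl_continuous : Continuous Wl := gIso.symm.continuous

lemma gfun_Wl (y : ℝ) : gfun (Wl y) = y := by
  have := gIso.apply_symm_apply y
  rwa [show ⇑gIso = gfun from StrictMono.coe_orderIsoOfSurjective _ _ _] at this

lemma Wl_gfun (x : ℝ) : Wl (gfun x) = x := by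
  have := gIso.symm_apply_apply x
  rwa [show ⇑gIso = gfun from StrictMono.coe_orderIsoOfSurjective _ _ _] at this

lemma Wl_zero : Wl 0 = 0 := by
  simpa [gfun] using Wl_gfun 0

lemma Wl_pos {y : ℝ} (hy : 0 < y) : 0 < Wl y := by
  have : Wl 0 < Wl y := gIso.symm.strictMono hy
  rwa [Wl_zero] at this

lemma Wl_exp {y : ℝ} (hy : 0 < y) : Wl y * Real.exp (Wl y) = y := by
  have h := gfun_Wl y
  have hp := Wl_pos hy
  rwa [gfun, if_neg (not_le.2 hp)] at h

lemma Wl_mono : Monotone Wl := gIso.symm.monotone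

lemma Wl_ge {c y : ℝ} (h : gfun c ≤ y) : c ≤ Wl y := by
  have := Wl_mono h
  rwa [Wl_gfun] at this

/-- For `α < 1` and all large `λ`, the real system coming from the second-order
characteristic equation `ω² + λ^α = -λ e^{-ω}` (with `ω = y₁ + i y₂`) is solvable with
`y₁ > 0` and `y₂ ∈ [π/2, π)`. -/
theorem second_order_char_eq_solvable (α : ℝ) (hα : α < 1) :
    ∃ Λ : ℝ, 0 < Λ ∧ ∀ lam : ℝ, Λ ≤ lam →
      ∃ y₁ : ℝ, 0 < y₁ ∧ ∃ y₂ ∈ Ico (π / 2) π,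
        (y₁ ^ 2 - y₂ ^ 2 + lam ^ α = -lam * Real.exp (-y₁) * Real.cos y₂ ∧
          2 * y₁ * y₂ = lam * Real.exp (-y₁) * Real.sin y₂) ∧
        ((y₁ : ℂ) + (y₂ : ℂ) * Complex.I) ^ 2 + ((lam ^ α : ℝ) : ℂ)
          = -(lam : ℂ) * Complex.exp (-((y₁ : ℂ) + (y₂ : ℂ) * Complex.I)) := by
  refine ⟨max 2 (π^2 * Real.exp (π/2)), lt_of_lt_of_le two_pos (le_max_left _ _), ?_⟩
  intro lam hlam
  have hpi : (0:ℝ) < π := Real.pi_pos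
  have hlam2 : (2:ℝ) ≤ lam := le_trans (le_max_left _ _) hlam
  have hlam1 : (1:ℝ) < lam := by linarith
  have hlampos : (0:ℝ) < lam := by linarith
  have hlamπ : π^2 * Real.exp (π/2) ≤ lam := le_trans (le_max_right _ _) hlam
  set c : ℝ → ℝ := fun y => lam * Real.sin y / (2*y) with hc
  set F : ℝ → ℝ := fun y =>
    (Wl (c y))^2 - y^2 + lam^α + lam * Real.exp (-(Wl (c y))) * Real.cos y with hF
  have hhalf : (0:ℝ) < π/2 := by linarith
  have hcont : ContinuousOn F (Icc (π/2) π) := by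
    have hcc : ContinuousOn c (Icc (π/2) π) := by
      apply ContinuousOn.div
      · exact (continuous_const.mul Real.continuous_sin).continuousOn
      · exact (continuous_const.mul continuous_id).continuousOn
      · intro y hy
        have h1 : π/2 ≤ y := hy.1
        have h2 : 0 < y := lt_of_lt_of_le hhalf h1
        positivity
    have hW : ContinuousOn (fun y => Wl (c y)) (Icc (π/2) π) :=
      Wl_continuous.comp_continuousOn hcc
    apply ContinuousOn.add
    · apply ContinuousOn.add
      · exact (hW.pow 2).sub ((continuous_id.pow 2).continuousOn)
      · exact continuousOn_const
    · exact (continuousOn_const.mul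
        (Real.continuous_exp.comp_continuousOn hW.neg)).mul
        Real.continuous_cos.continuousOn
  have hc_half : c (π/2) = lam / π := by
    simp only [hc, Real.sin_pi_div_two]
    field_simp
  have hWhalf : π/2 ≤ Wl (c (π/2)) := by
    rw [hc_half]
    apply Wl_ge
    rw [gfun, if_neg (not_le.2 hhalf)]
    rw [le_div_iff₀ hpi]
    nlinarith [Real.exp_pos (π/2), sq_nonneg π]
  have hFhalf : 0 < F (π/2) := by
    have h1 : 0 < lam ^ α := Real.rpow_pos_of_pos hlampos α
    have h2 : (π/2)^2 ≤ (Wl (c (π/2)))^2 := by nlinarith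
    simp only [hF, Real.cos_pi_div_two, mul_zero, add_zero]
    linarith
  have hcπ : c π = 0 := by simp [hc]
  have hFπ : F π < 0 := by
    have hrp : lam ^ α < lam := by
      calc lam ^ α < lam ^ (1:ℝ) := rpow_lt_rpow_of_exponent_lt hlam1 hα
        _ = lam := Real.rpow_one lam
    simp only [hF, hcπ, Wl_zero, Real.cos_pi, neg_zero, Real.exp_zero]
    nlinarith [sq_nonneg π]
  obtain ⟨y₂, hy₂mem, hFy₂⟩ := intermediate_value_Icc' (by linarith : π/2 ≤ π) hcont
    ⟨hFπ.le, hFhalf.le⟩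
  have hy₂lt : y₂ < π := by
    rcases lt_or_eq_of_le hy₂mem.2 with h | h
    · exact h
    · exfalso; rw [h] at hFy₂; linarith
  have hy₂pos : 0 < y₂ := lt_of_lt_of_le hhalf hy₂mem.1
  have hsin : 0 < Real.sin y₂ := Real.sin_pos_of_pos_of_lt_pi hy₂pos hy₂lt
  have hcpos : 0 < c y₂ := by
    simp only [hc]
    positivity
  set y₁ := Wl (c y₂) with hy₁
  have hy₁pos : 0 < y₁ := Wl_pos hcpos
  have hkey : y₁ * Real.exp y₁ = lam * Real.sin y₂ / (2*y₂) := Wl_exp hcpos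
  have hkey' : y₁ * Real.exp y₁ * (2*y₂) = lam * Real.sin y₂ := by
    rw [hkey]
    field_simp
  have heq2 : 2 * y₁ * y₂ = lam * Real.exp (-y₁) * Real.sin y₂ := by
    have he := (Real.exp_pos y₁).ne'
    rw [Real.exp_neg]
    field_simp
    linear_combination hkey'
  have heq1 : y₁^2 - y₂^2 + lam^α = -lam * Real.exp (-y₁) * Real.cos y₂ := by
    simp only [hF] at hFy₂
    linarith
  refine ⟨y₁, hy₁pos, y₂, ⟨hy₂mem.1, hy₂lt⟩, ⟨heq1, heq2⟩, ?_⟩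
  rw [Complex.ext_iff]
  constructor
  · simp [Complex.exp_re, Complex.exp_im, pow_two]
    linear_combination heq1
  · simp [Complex.exp_re, Complex.exp_im, pow_two]
    linear_combination heq2
end

section
/- Let α < 1, let (λ_n) be a sequence of positive reals with λ_n → ∞, and suppose for each n that y₁ⁿ > 0 and y₂ⁿ ∈ [π/2, π) satisfy y₁ⁿ² − y₂ⁿ² + λ_n^α = −λ_n e^{−y₁ⁿ} cos(y₂ⁿ) and 2 y₁ⁿ y₂ⁿ = λ_n e^{−y₁ⁿ} sin(y₂ⁿ). Then the sequence (y₁ⁿ) is unbounded; in particular there is a subsequence along which y₁ⁿ → ∞. -/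
open Real Set Filter

set_option maxHeartbeats 800000 in
/-- If `λ_n → ∞` and `(y₁ⁿ, y₂ⁿ)` solve the real system coming from the second-order
characteristic equation, then `(y₁ⁿ)` is unbounded; in particular some subsequence
tends to `∞`. -/
theorem second_order_y1_unbounded (α : ℝ) (hα : α < 1)
    (lam y₁ y₂ : ℕ → ℝ)
    (hlam_pos : ∀ n, 0 < lam n)
    (hlam : Tendsto lam atTop atTop)
    (hy₁ : ∀ n, 0 < y₁ n)
    (hy₂ : ∀ n, y₂ n ∈ Ico (π / 2) π)
    (heq1 : ∀ n, y₁ n ^ 2 - y₂ n ^ 2 + lam n ^ α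
      = -lam n * Real.exp (-y₁ n) * Real.cos (y₂ n))
    (heq2 : ∀ n, 2 * y₁ n * y₂ n = lam n * Real.exp (-y₁ n) * Real.sin (y₂ n)) :
    ¬ BddAbove (Set.range y₁) ∧
    ∃ φ : ℕ → ℕ, StrictMono φ ∧ Tendsto (y₁ ∘ φ) atTop atTop := by
  have hπ4 : π < 4 := by linarith [Real.pi_lt_d2]
  have hπ0 : 0 < π := Real.pi_pos
  have key : ¬ BddAbove (Set.range y₁) := by
    rintro ⟨M, hM⟩
    have hM' : ∀ n, y₁ n ≤ M := fun n => hM ⟨n, rfl⟩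
    have hM0 : 0 < M := lt_of_lt_of_le (hy₁ 0) (hM' 0)
    set e : ℝ := Real.exp (-M) with he
    have he0 : 0 < e := Real.exp_pos _
    set ε : ℝ := e / 4 with hε
    have hεpos : 0 < ε := by positivity
    clear_value ε e
    have h1 : Tendsto (fun x : ℝ => x ^ (α - 1)) atTop (nhds 0) := by
      have := tendsto_rpow_neg_atTop (by linarith : (0:ℝ) < 1 - α)
      simpa [neg_sub] using this
    have h2 : ∀ᶠ n in atTop, (lam n) ^ (α - 1) < ε :=
      hlam.eventually (h1.eventually_lt_const hεpos)
    have h3 : ∀ᶠ n in atTop, (M ^ 2 + 16) / ε ≤ lam n := hlam.eventually_ge_atTop _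
    have h4 : ∀ᶠ n in atTop, 12 * M / e ≤ lam n := hlam.eventually_ge_atTop _
    obtain ⟨n, hn2, hn3, hn4⟩ := (h2.and (h3.and h4)).exists
    set a := y₁ n with ha
    set b := y₂ n with hb
    set l := lam n with hl
    have hl0 : 0 < l := hlam_pos n
    have hp : l ^ α = l ^ (α - 1) * l := by
      have h := Real.rpow_add_one hl0.ne' (α - 1)
      rw [sub_add_cancel] at h
      exact h
    have hp0 : 0 < l ^ α := Real.rpow_pos_of_pos hl0 α
    have hple : l ^ α ≤ ε * l := by
      rw [hp]
      have := Real.rpow_pos_of_pos hl0 (α - 1)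
      nlinarith
    have hεl : M ^ 2 + 16 ≤ ε * l := by
      rw [div_le_iff₀ hεpos] at hn3; linarith
    have hel : 12 * M ≤ e * l := by
      rw [div_le_iff₀ he0] at hn4; linarith
    have hb1 : 0 < b := lt_of_lt_of_le (by positivity) (hy₂ n).1
    have hb2 : b < 4 := lt_trans (hy₂ n).2 hπ4
    have haM : a ≤ M := hM' n
    have ha0 : 0 < a := hy₁ n
    have hmain : (a ^ 2 - b ^ 2 + l ^ α) ^ 2 + (2 * a * b) ^ 2
        = l ^ 2 * Real.exp (-a) ^ 2 := by
      rw [heq1 n, heq2 n]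
      linear_combination (l * Real.exp (-a)) ^ 2 * Real.sin_sq_add_cos_sq b
    have hexp : e ≤ Real.exp (-a) := by rw [he]; exact Real.exp_le_exp.2 (by linarith)
    have hexp2 : e ^ 2 ≤ Real.exp (-a) ^ 2 := by nlinarith [Real.exp_pos (-a)]
    clear_value l b a
    have hεl' : 0 < ε * l := mul_pos hεpos hl0
    have habs : (a ^ 2 - b ^ 2 + l ^ α) ^ 2 ≤ (2 * ε * l) ^ 2 := by
      apply sq_le_sq'
      · nlinarith
      · nlinarith
    have h2ab : (2 * a * b) ^ 2 ≤ (8 * M) ^ 2 := by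
      apply sq_le_sq'
      · nlinarith
      · nlinarith
    have hM2 : 144 * M ^ 2 ≤ e ^ 2 * l ^ 2 := by nlinarith
    have h5 : (2 * ε * l) ^ 2 = e ^ 2 * l ^ 2 / 4 := by rw [hε]; ring
    have h6 : e ^ 2 * l ^ 2 ≤ l ^ 2 * Real.exp (-a) ^ 2 := by nlinarith
    have h7 : 0 < e ^ 2 * l ^ 2 := by positivity
    linarith [hmain, habs, h2ab, hM2]
  refine ⟨key, ?_⟩
  have hfreq : ∀ m : ℕ, ∃ᶠ k in atTop, (m : ℝ) < y₁ k := by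
    intro m
    rw [Filter.frequently_atTop]
    intro N
    by_contra h
    push_neg at h
    apply key
    refine ⟨max (m : ℝ) ((Finset.range (N + 1)).sup' (by simp) y₁), ?_⟩
    rintro x ⟨n, rfl⟩
    by_cases hn : N ≤ n
    · exact le_max_of_le_left (h n hn)
    · exact le_max_of_le_right (Finset.le_sup' y₁ (by simp; omega))
  obtain ⟨φ, hφ, hy⟩ := Filter.extraction_forall_of_frequently hfreq
  exact ⟨φ, hφ, tendsto_atTop_mono (fun n => (hy n).le) tendsto_natCast_atTop_atTop⟩
end
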